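/- Under the assumptions of the energy identity for the chemotaxis tumor-growth system, the energy E is a strict Lyapunov function: if a solution satisfies E(φ(t),σ(t)) = E(φ₀,σ₀) for all t ≥ 0, then ∇μ(t) = 0, ∇N_σ(t) = 0, and p(φ)(N_σ(t) − μ(t)) = 0 almost everywhere in Ω for all t, and consequently φ_t ≡ 0 and σ_t ≡ 0, i.e., (φ₀,σ₀) is a stationary point. -/

import Mathlib

/-!
A constant energy has zero derivative, and by the first and third equations together with
integration by parts that derivative equals `-∫ (|∇μ|² + |∇N_σ|² + p(φ)(N_σ - μ)²)`. Hence each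
of the three nonnegative integrands vanishes a.e. in `Ω`. A set of full measure is dense, so a map
vanishing a.e. on the open set `Ω` has zero derivative at every point of `Ω`; applied to `Dμ` and
`DN_σ` this gives `Δμ = ΔN_σ = 0` on `Ω`, and the equations reduce to `φ_t = σ_t = 0`.
-/

open MeasureTheory

noncomputable section

/-- The Laplacian of a scalar field on `ℝ³`. -/
def lap14 (f : EuclideanSpace ℝ (Fin 3) → ℝ) (x : EuclideanSpace ℝ (Fin 3)) : ℝ :=
  ∑ i : Fin 3, iteratedFDeriv ℝ 2 f x ![EuclideanSpace.single i 1, EuclideanSpace.single i 1]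

/-- The Cahn–Hilliard tumor-growth energy with chemotaxis, at time `s`. -/
def En14 (Ω : Set (EuclideanSpace ℝ (Fin 3))) (χφ χσ : ℝ) (Ψ : ℝ → ℝ)
    (φ σ : ℝ → EuclideanSpace ℝ (Fin 3) → ℝ) (s : ℝ) : ℝ :=
  (1 / 2) * (∫ x in Ω, ‖gradient (φ s) x‖ ^ 2) + (∫ x in Ω, Ψ (φ s x))
    + (χσ / 2) * (∫ x in Ω, (σ s x) ^ 2) + χφ * (∫ x in Ω, σ s x * (1 - φ s x))

open Filter Topology

theorem IsOpen.subset_closure_setOf_of_ae_restrict {X : Type*} [TopologicalSpace X]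
    [MeasurableSpace X] {μ : Measure X} [μ.IsOpenPosMeasure] {U : Set X} {P : X → Prop}
    (hU : IsOpen U) (h : ∀ᵐ x ∂μ.restrict U, P x) : U ⊆ closure {x | P x} :=
  ((μ.dense_of_ae (ae_imp_of_ae_restrict h)).open_subset_closure_inter hU).trans
    (closure_mono fun _ hx => hx.2 hx.1)

-- The zero set has unique derivatives at `x`; the nondifferentiable case is the junk value `0`.
theorem fderiv_eq_zero_of_closure_zeroSet_mem_nhds {𝕜 E F : Type*} [NontriviallyNormedField 𝕜]
    [NormedAddCommGroup E] [NormedSpace 𝕜 E] [NormedAddCommGroup F] [NormedSpace 𝕜 F]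
    {g : E → F} {x : E} (h : closure {y | g y = 0} ∈ 𝓝 x) : fderiv 𝕜 g x = 0 := by
  by_cases hg : DifferentiableAt 𝕜 g x
  · have hx : g x = 0 := by
      simpa using hg.continuousAt.continuousWithinAt.mem_closure (mem_of_mem_nhds h)
        (t := {0}) fun _ hy => hy
    have hunique : UniqueDiffWithinAt 𝕜 {y | g y = 0} x :=
      (uniqueDiffWithinAt_of_mem_nhds h).of_closure
    exact hunique.eq hg.hasFDerivAt.hasFDerivWithinAt
      ((hasFDerivWithinAt_const (0 : F) x _).congr (fun _ hy => hy) hx)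
  · exact fderiv_zero_of_not_differentiableAt hg

theorem lap14_eq_zero_of_ae_restrict_gradient_eq_zero {f : EuclideanSpace ℝ (Fin 3) → ℝ}
    {U : Set (EuclideanSpace ℝ (Fin 3))} (hU : IsOpen U)
    (h : ∀ᵐ x ∂volume.restrict U, gradient f x = 0) : ∀ x ∈ U, lap14 f x = 0 := by
  have hfderiv : ∀ᵐ x ∂volume.restrict U, fderiv ℝ f x = 0 :=
    h.mono fun x hx => by rw [← toDual_gradient, hx, map_zero]
  intro x hx
  have hsecond : fderiv ℝ (fderiv ℝ f) x = 0 := fderiv_eq_zero_of_closure_zeroSet_mem_nhds <|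
    mem_of_superset (hU.mem_nhds hx) (hU.subset_closure_setOf_of_ae_restrict hfderiv)
  simp [lap14, iteratedFDeriv_two_apply, hsecond]

theorem HasDerivAt.eq_zero_of_forall_le_eq {F : Type*} [NormedAddCommGroup F] [NormedSpace ℝ F]
    {f : ℝ → F} {f' : F} {t : ℝ} (hf : HasDerivAt f f' t) (hc : ∀ s, t ≤ s → f s = f t) :
    f' = 0 :=
  (uniqueDiffOn_Ici t t Set.self_mem_Ici).eq_deriv _ hf.hasDerivWithinAt
    ((hasDerivWithinAt_const t _ (f t)).congr (fun s hs => hc s hs) rfl)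

section Dissipation

variable {X : Type*} [MeasurableSpace X] {ν : Measure X}

theorem ae_eq_zero_of_integral_norm_sq_eq_zero {E : Type*} [NormedAddCommGroup E] {f : X → E}
    (hi : Integrable (fun x => ‖f x‖ ^ 2) ν) (h : ∫ x, ‖f x‖ ^ 2 ∂ν = 0) : ∀ᵐ x ∂ν, f x = 0 :=
  ((integral_eq_zero_iff_of_nonneg (fun _ => by positivity) hi).1 h).mono fun x hx => by
    simpa using hx

theorem ae_mul_eq_zero_of_integral_mul_sq_eq_zero {q d : X → ℝ} (hq : ∀ x, 0 ≤ q x)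
    (hi : Integrable (fun x => q x * d x ^ 2) ν) (h : ∫ x, q x * d x ^ 2 ∂ν = 0) :
    ∀ᵐ x ∂ν, q x * d x = 0 :=
  ((integral_eq_zero_iff_of_nonneg (fun x => mul_nonneg (hq x) (sq_nonneg _)) hi).1 h).mono
    fun x hx => by simpa using hx

-- The exchange terms, tested against `μ` and `N` with opposite signs, combine into `-q (N - μ)²`.
theorem setIntegral_dissipation {Ω : Set X} (hΩ : MeasurableSet Ω)
    {φt σt μ N Lμ LN q : X → ℝ}
    (hφt : ∀ x ∈ Ω, φt x = Lμ x + q x * (N x - μ x))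
    (hσt : ∀ x ∈ Ω, σt x = LN x - q x * (N x - μ x))
    (hLμ : IntegrableOn (fun x => Lμ x * μ x) Ω ν) (hLN : IntegrableOn (fun x => LN x * N x) Ω ν)
    (hqμ : IntegrableOn (fun x => q x * (N x - μ x) * μ x) Ω ν)
    (hqN : IntegrableOn (fun x => q x * (N x - μ x) * N x) Ω ν) :
    ∫ x in Ω, (φt x * μ x + σt x * N x) ∂ν
      = (∫ x in Ω, Lμ x * μ x ∂ν) + (∫ x in Ω, LN x * N x ∂ν)
        - ∫ x in Ω, q x * (N x - μ x) ^ 2 ∂ν := by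
  calc ∫ x in Ω, (φt x * μ x + σt x * N x) ∂ν
      = ∫ x in Ω, ((Lμ x * μ x + LN x * N x)
          - (q x * (N x - μ x) * N x - q x * (N x - μ x) * μ x)) ∂ν :=
        setIntegral_congr_fun hΩ fun x hx => by rw [hφt x hx, hσt x hx]; ring
    _ = (∫ x in Ω, Lμ x * μ x ∂ν) + (∫ x in Ω, LN x * N x ∂ν)
          - ((∫ x in Ω, q x * (N x - μ x) * N x ∂ν) - ∫ x in Ω, q x * (N x - μ x) * μ x ∂ν) := by
        rw [integral_sub, integral_add hLμ hLN, integral_sub hqN hqμ]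
        exacts [hLμ.add hLN, hqN.sub hqμ]
    _ = _ := by
        rw [← integral_sub hqN hqμ]
        congr 1
        exact integral_congr_ae (ae_of_all _ fun x => by ring)

end Dissipation

theorem stmt_14_general
    (Ω : Set (EuclideanSpace ℝ (Fin 3))) (hΩm : MeasurableSet Ω)
    (hΩop : IsOpen Ω)
    (χφ χσ : ℝ)
    (Ψ : ℝ → ℝ)
    (p : ℝ → ℝ) (hp0 : ∀ s : ℝ, 0 ≤ p s)
    (φ σ μ' Nσ φt σt : ℝ → EuclideanSpace ℝ (Fin 3) → ℝ)
    (PDE1 : ∀ t, ∀ x ∈ Ω, φt t x = lap14 (μ' t) x + p (φ t x) * (Nσ t x - μ' t x))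
    (PDE3 : ∀ t, ∀ x ∈ Ω, σt t x = lap14 (Nσ t) x - p (φ t x) * (Nσ t x - μ' t x))
    (g1 : ∀ t, (∫ x in Ω, lap14 (μ' t) x * μ' t x) = -∫ x in Ω, ‖gradient (μ' t) x‖ ^ 2)
    (g2 : ∀ t, (∫ x in Ω, lap14 (Nσ t) x * Nσ t x) = -∫ x in Ω, ‖gradient (Nσ t) x‖ ^ 2)
    (hE : ∀ t, HasDerivAt (En14 Ω χφ χσ Ψ φ σ)
      (∫ x in Ω, (φt t x * μ' t x + σt t x * Nσ t x)) t)
    (hi1 : ∀ t, Integrable (fun x => lap14 (μ' t) x * μ' t x) (volume.restrict Ω))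
    (hi2 : ∀ t, Integrable (fun x => lap14 (Nσ t) x * Nσ t x) (volume.restrict Ω))
    (hi3 : ∀ t, Integrable (fun x => p (φ t x) * (Nσ t x - μ' t x) * μ' t x)
      (volume.restrict Ω))
    (hi4 : ∀ t, Integrable (fun x => p (φ t x) * (Nσ t x - μ' t x) * Nσ t x)
      (volume.restrict Ω))
    (hi5 : ∀ t, Integrable (fun x => ‖gradient (μ' t) x‖ ^ 2) (volume.restrict Ω))
    (hi6 : ∀ t, Integrable (fun x => ‖gradient (Nσ t) x‖ ^ 2) (volume.restrict Ω))
    (hi7 : ∀ t, Integrable (fun x => p (φ t x) * (Nσ t x - μ' t x) ^ 2) (volume.restrict Ω))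
    (hconst : ∀ t : ℝ, 0 ≤ t → En14 Ω χφ χσ Ψ φ σ t = En14 Ω χφ χσ Ψ φ σ 0) :
    ∀ t : ℝ, 0 ≤ t →
      (∀ᵐ x ∂(volume.restrict Ω), gradient (μ' t) x = 0) ∧
      (∀ᵐ x ∂(volume.restrict Ω), gradient (Nσ t) x = 0) ∧
      (∀ᵐ x ∂(volume.restrict Ω), p (φ t x) * (Nσ t x - μ' t x) = 0) ∧
      (∀ᵐ x ∂(volume.restrict Ω), φt t x = 0) ∧
      (∀ᵐ x ∂(volume.restrict Ω), σt t x = 0) := by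
  intro t ht
  have hstationary : ∫ x in Ω, (φt t x * μ' t x + σt t x * Nσ t x) = 0 :=
    (hE t).eq_zero_of_forall_le_eq fun s hs => (hconst s (ht.trans hs)).trans (hconst t ht).symm
  have hdissipation :=
    setIntegral_dissipation hΩm (PDE1 t) (PDE3 t) (hi1 t) (hi2 t) (hi3 t) (hi4 t)
  rw [hstationary, g1, g2] at hdissipation
  have hμ_nonneg : 0 ≤ ∫ x in Ω, ‖gradient (μ' t) x‖ ^ 2 := integral_nonneg fun _ => by positivity
  have hN_nonneg : 0 ≤ ∫ x in Ω, ‖gradient (Nσ t) x‖ ^ 2 := integral_nonneg fun _ => by positivity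
  have hexchange_nonneg : 0 ≤ ∫ x in Ω, p (φ t x) * (Nσ t x - μ' t x) ^ 2 :=
    integral_nonneg fun _ => mul_nonneg (hp0 _) (sq_nonneg _)
  have hgradμ := ae_eq_zero_of_integral_norm_sq_eq_zero (hi5 t) (by linarith)
  have hgradN := ae_eq_zero_of_integral_norm_sq_eq_zero (hi6 t) (by linarith)
  have hexchange := ae_mul_eq_zero_of_integral_mul_sq_eq_zero (fun _ => hp0 _) (hi7 t)
    (by linarith)
  have hlapμ := lap14_eq_zero_of_ae_restrict_gradient_eq_zero hΩop hgradμ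
  have hlapN := lap14_eq_zero_of_ae_restrict_gradient_eq_zero hΩop hgradN
  refine ⟨hgradμ, hgradN, hexchange, ?_, ?_⟩
  · filter_upwards [hexchange, ae_restrict_mem hΩm] with x hx hxΩ
    rw [PDE1 t x hxΩ, hlapμ x hxΩ, hx, add_zero]
  · filter_upwards [hexchange, ae_restrict_mem hΩm] with x hx hxΩ
    rw [PDE3 t x hxΩ, hlapN x hxΩ, hx, sub_zero]

/-- The energy is a strict Lyapunov function: if `E(φ(t),σ(t)) = E(φ₀,σ₀)`
for all `t ≥ 0`, then `∇μ = 0`, `∇N_σ = 0` and `p(φ)(N_σ - μ) = 0` a.e. in `Ω` for all `t`,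
and consequently `φ_t ≡ 0`, `σ_t ≡ 0`, i.e. `(φ₀,σ₀)` is a stationary point. -/
theorem stmt_14
    (Ω : Set (EuclideanSpace ℝ (Fin 3))) (hΩm : MeasurableSet Ω)
    (hΩop : IsOpen Ω) (hΩfin : volume Ω < ⊤)
    (χφ χσ : ℝ) (hχφ : 0 < χφ) (hχσ : 0 < χσ)
    (Ψ : ℝ → ℝ) (hΨ : ContDiff ℝ 2 Ψ)
    (p : ℝ → ℝ) (hpc : Continuous p) (hp0 : ∀ s : ℝ, 0 ≤ p s)
    (φ σ μ' Nσ φt σt : ℝ → EuclideanSpace ℝ (Fin 3) → ℝ)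
    (hNσ : ∀ t x, Nσ t x = χσ * σ t x + χφ * (1 - φ t x))
    (hdφ : ∀ t x, HasDerivAt (fun s => φ s x) (φt t x) t)
    (hdσ : ∀ t x, HasDerivAt (fun s => σ s x) (σt t x) t)
    (PDE1 : ∀ t, ∀ x ∈ Ω, φt t x = lap14 (μ' t) x + p (φ t x) * (Nσ t x - μ' t x))
    (PDE2 : ∀ t, ∀ x ∈ Ω, μ' t x = -lap14 (φ t) x + deriv Ψ (φ t x) - χφ * σ t x)
    (PDE3 : ∀ t, ∀ x ∈ Ω, σt t x = lap14 (Nσ t) x - p (φ t x) * (Nσ t x - μ' t x))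
    (g1 : ∀ t, (∫ x in Ω, lap14 (μ' t) x * μ' t x) = -∫ x in Ω, ‖gradient (μ' t) x‖ ^ 2)
    (g2 : ∀ t, (∫ x in Ω, lap14 (Nσ t) x * Nσ t x) = -∫ x in Ω, ‖gradient (Nσ t) x‖ ^ 2)
    (hE : ∀ t, HasDerivAt (En14 Ω χφ χσ Ψ φ σ)
      (∫ x in Ω, (φt t x * μ' t x + σt t x * Nσ t x)) t)
    (hi1 : ∀ t, Integrable (fun x => lap14 (μ' t) x * μ' t x) (volume.restrict Ω))
    (hi2 : ∀ t, Integrable (fun x => lap14 (Nσ t) x * Nσ t x) (volume.restrict Ω))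
    (hi3 : ∀ t, Integrable (fun x => p (φ t x) * (Nσ t x - μ' t x) * μ' t x)
      (volume.restrict Ω))
    (hi4 : ∀ t, Integrable (fun x => p (φ t x) * (Nσ t x - μ' t x) * Nσ t x)
      (volume.restrict Ω))
    (hi5 : ∀ t, Integrable (fun x => ‖gradient (μ' t) x‖ ^ 2) (volume.restrict Ω))
    (hi6 : ∀ t, Integrable (fun x => ‖gradient (Nσ t) x‖ ^ 2) (volume.restrict Ω))
    (hi7 : ∀ t, Integrable (fun x => p (φ t x) * (Nσ t x - μ' t x) ^ 2) (volume.restrict Ω))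
    (hconst : ∀ t : ℝ, 0 ≤ t → En14 Ω χφ χσ Ψ φ σ t = En14 Ω χφ χσ Ψ φ σ 0) :
    ∀ t : ℝ, 0 ≤ t →
      (∀ᵐ x ∂(volume.restrict Ω), gradient (μ' t) x = 0) ∧
      (∀ᵐ x ∂(volume.restrict Ω), gradient (Nσ t) x = 0) ∧
      (∀ᵐ x ∂(volume.restrict Ω), p (φ t x) * (Nσ t x - μ' t x) = 0) ∧
      (∀ᵐ x ∂(volume.restrict Ω), φt t x = 0) ∧
      (∀ᵐ x ∂(volume.restrict Ω), σt t x = 0) :=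
  stmt_14_general Ω hΩm hΩop χφ χσ Ψ p hp0 φ σ μ' Nσ φt σt PDE1 PDE3 g1 g2 hE hi1 hi2 hi3 hi4 hi5
    hi6 hi7 hconst

end
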